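/- arXiv:2512.09842 — 2 statements merged into one kernel-verified Lean document; each statement's English description precedes it below -/
import Mathlib

section
/- Besicovitch's theorem: there exists a Kakeya set K ⊆ ℝ² with Lebesgue measure |K| = 0. -/
open MeasureTheory

/-- A Kakeya set in `ℝⁿ`: a compact set containing a unit line segment in every direction. -/
def IsKakeya {n : ℕ} (K : Set (EuclideanSpace ℝ (Fin n))) : Prop :=
  IsCompact K ∧
    ∀ ω : EuclideanSpace ℝ (Fin n), ‖ω‖ = 1 →
      ∃ a : EuclideanSpace ℝ (Fin n), ∀ t ∈ Set.Icc (0 : ℝ) 1, a + t • ω ∈ K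

/-!
For digits `d ∈ {0,1}^ℕ` and a sequence `t` in `[0,1]`, let `s(d) = ∑ dᵢ 2^-(i+1)` and
`c(d) = ∑ dᵢ tᵢ 2^-(i+1)`. Every slope in `[0,1]` is some `s(d)`, so the compact set `K` of points
`(y, s(d) y - c(d))` with `y ∈ [0,1]` contains a segment of every slope in `[0,1]`.
The slice of `K` over `y` is the set of sums `∑ dᵢ (y - tᵢ) 2^-(i+1)`. If `|y - tᵢ| ≤ ε` for `L`
consecutive indices starting at `n`, the first `n` digits give `2^n` centres and the remaining
digits move the sum by at most `2^-n (ε + 2^-L)`, so the slice has measure at most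
`2 (ε + 2^-L)`. Choosing `t` so that every `y ∈ [0,1]` is approximated in this way for all `ε`
and `L`, every slice is null, hence so is `K` by Fubini. Finitely many linear images of `K`
cover all directions.
-/

open Set Real
open scoped Pointwise

section Segments

variable {E F : Type*} [AddCommGroup E] [Module ℝ E] [AddCommGroup F] [Module ℝ F]

def ContainsSegment (K : Set E) (v : E) : Prop :=
  ∃ a : E, ∀ t ∈ Icc (0 : ℝ) 1, a + t • v ∈ K

variable {K L : Set E} {v : E}

theorem ContainsSegment.mono (h : ContainsSegment K v) (hKL : K ⊆ L) : ContainsSegment L v :=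
  let ⟨a, ha⟩ := h
  ⟨a, fun t ht => hKL (ha t ht)⟩

theorem ContainsSegment.smul (h : ContainsSegment K v) {c : ℝ} (hc : c ∈ Icc (0 : ℝ) 1) :
    ContainsSegment K (c • v) := by
  obtain ⟨a, ha⟩ := h
  refine ⟨a, fun t ht => ?_⟩
  rw [smul_smul]
  exact ha _ ⟨mul_nonneg ht.1 hc.1, mul_le_one₀ ht.2 hc.1 hc.2⟩

theorem ContainsSegment.preimage (e : F ≃ₗ[ℝ] E) {v : F} (h : ContainsSegment K (e v)) :
    ContainsSegment (e ⁻¹' K) v := by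
  obtain ⟨a, ha⟩ := h
  exact ⟨e.symm a, fun t ht => by simpa using ha t ht⟩

end Segments

section BesicovitchSets

variable {E F : Type*} [AddCommGroup E] [Module ℝ E] [TopologicalSpace E] [MeasurableSpace E]
  [AddCommGroup F] [Module ℝ F] [TopologicalSpace F] [MeasurableSpace F]

def HasBesicovitchSet (μ : Measure E) (S : Set E) : Prop :=
  ∃ K : Set E, IsCompact K ∧ μ K = 0 ∧ ∀ v ∈ S, ContainsSegment K v

variable {μ : Measure E} {S T : Set E}

theorem HasBesicovitchSet.mono (h : HasBesicovitchSet μ S) (hTS : T ⊆ S) :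
    HasBesicovitchSet μ T :=
  let ⟨K, hK, hK0, hKS⟩ := h
  ⟨K, hK, hK0, fun v hv => hKS v (hTS hv)⟩

theorem HasBesicovitchSet.union (hS : HasBesicovitchSet μ S) (hT : HasBesicovitchSet μ T) :
    HasBesicovitchSet μ (S ∪ T) := by
  obtain ⟨K, hK, hK0, hKS⟩ := hS
  obtain ⟨L, hL, hL0, hLT⟩ := hT
  refine ⟨K ∪ L, hK.union hL, measure_union_null hK0 hL0, ?_⟩
  rintro v (hv | hv)
  · exact (hKS v hv).mono subset_union_left
  · exact (hLT v hv).mono subset_union_right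

theorem HasBesicovitchSet.smul_Icc (h : HasBesicovitchSet μ S) :
    HasBesicovitchSet μ (Icc (0 : ℝ) 1 • S) := by
  obtain ⟨K, hK, hK0, hKS⟩ := h
  refine ⟨K, hK, hK0, ?_⟩
  rintro _ ⟨c, hc, v, hv, rfl⟩
  exact (hKS v hv).smul hc

theorem HasBesicovitchSet.preimage {ν : Measure F} (e : F ≃L[ℝ] E)
    (he : Measure.QuasiMeasurePreserving e ν μ) (h : HasBesicovitchSet μ S) :
    HasBesicovitchSet ν (e ⁻¹' S) := by
  obtain ⟨K, hK, hK0, hKS⟩ := h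
  exact ⟨e ⁻¹' K, e.toHomeomorph.isCompact_preimage.2 hK, he.preimage_null hK0,
    fun v hv => (hKS _ hv).preimage e.toLinearEquiv⟩

end BesicovitchSets

theorem ContinuousLinearEquiv.quasiMeasurePreserving_addHaar {E : Type*} [NormedAddCommGroup E]
    [NormedSpace ℝ E] [MeasurableSpace E] [BorelSpace E] [FiniteDimensional ℝ E]
    (μ : Measure E) [μ.IsAddHaarMeasure] (e : E ≃L[ℝ] E) :
    Measure.QuasiMeasurePreserving e μ μ :=
  Measure.ContinuousLinearMap.quasiMeasurePreserving μ (e : E →L[ℝ] E)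
    (LinearEquiv.isUnit_det' e.toLinearEquiv).ne_zero

theorem hasSum_inv_two_pow_succ : HasSum (fun i : ℕ => ((2 : ℝ) ^ (i + 1))⁻¹) 1 := by
  convert hasSum_geometric_two' 1 using 2 with i
  ring

theorem ofDigitsTerm_two_le (d : ℕ → Fin 2) (i : ℕ) : ofDigitsTerm d i ≤ ((2 : ℝ) ^ (i + 1))⁻¹ :=
  ofDigitsTerm_le.trans_eq (by norm_num)

/-- `∑ᵢ dᵢ uᵢ / 2^(i+1)`. -/
noncomputable def digitSum (u : ℕ → ℝ) (d : ℕ → Fin 2) : ℝ :=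
  ∑' i, ofDigitsTerm d i * u i

section DigitSum

variable {u : ℕ → ℝ} {C : ℝ}

theorem norm_ofDigitsTerm_mul_le (d : ℕ → Fin 2) (i : ℕ) {x : ℝ} (hx : |x| ≤ C) :
    ‖ofDigitsTerm d i * x‖ ≤ C * ((2 : ℝ) ^ (i + 1))⁻¹ := by
  rw [norm_mul, norm_of_nonneg ofDigitsTerm_nonneg, mul_comm C]
  exact mul_le_mul (ofDigitsTerm_two_le d i) hx (abs_nonneg _) (by positivity)

theorem summable_ofDigitsTerm_mul (hu : ∀ i, |u i| ≤ C) (d : ℕ → Fin 2) :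
    Summable fun i => ofDigitsTerm d i * u i :=
  Summable.of_norm_bounded (hasSum_inv_two_pow_succ.mul_left C).summable
    (fun i => norm_ofDigitsTerm_mul_le d i (hu i))

theorem abs_digitSum_le (hu : ∀ i, |u i| ≤ C) (d : ℕ → Fin 2) : |digitSum u d| ≤ C := by
  simpa [digitSum] using tsum_of_norm_bounded (hasSum_inv_two_pow_succ.mul_left C)
    (fun i => norm_ofDigitsTerm_mul_le d i (hu i))

theorem continuous_digitSum (hu : ∀ i, |u i| ≤ C) : Continuous (digitSum u) :=
  continuous_tsum (fun i => by simp only [ofDigitsTerm]; fun_prop)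
    (hasSum_inv_two_pow_succ.mul_left C).summable (fun i d => norm_ofDigitsTerm_mul_le d i (hu i))

theorem digitSum_eq_sum_add (hu : ∀ i, |u i| ≤ C) (d : ℕ → Fin 2) (n : ℕ) :
    digitSum u d = ∑ i ∈ Finset.range n, ofDigitsTerm d i * u i +
      ((2 : ℝ) ^ n)⁻¹ * digitSum (fun i => u (i + n)) (fun i => d (i + n)) := by
  rw [digitSum, digitSum, ← (summable_ofDigitsTerm_mul hu d).sum_add_tsum_nat_add n,
    ← tsum_mul_left]
  congr 2 with i
  simp only [ofDigitsTerm, pow_add, mul_inv, Nat.cast_ofNat]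
  ring

theorem ofDigits_mul_sub_digitSum (hu : ∀ i, |u i| ≤ C) (d : ℕ → Fin 2) (y : ℝ) :
    ofDigits d * y - digitSum u d = digitSum (fun i => y - u i) d := by
  rw [ofDigits, digitSum, digitSum, ← tsum_mul_right,
    ← (summable_ofDigitsTerm.mul_right y).tsum_sub (summable_ofDigitsTerm_mul hu d)]
  simp only [mul_sub]

theorem abs_digitSum_le_of_abs_le (hu : ∀ i, |u i| ≤ C) {ε : ℝ} (hε : 0 ≤ ε) {L : ℕ}
    (huε : ∀ i < L, |u i| ≤ ε) (d : ℕ → Fin 2) : |digitSum u d| ≤ ε + C * ((2 : ℝ) ^ L)⁻¹ := by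
  have head : |∑ i ∈ Finset.range L, ofDigitsTerm d i * u i| ≤ ε := calc
    _ ≤ ∑ i ∈ Finset.range L, ε * ((2 : ℝ) ^ (i + 1))⁻¹ := by
      refine (Finset.abs_sum_le_sum_abs _ _).trans (Finset.sum_le_sum fun i hi => ?_)
      exact norm_ofDigitsTerm_mul_le d i (huε i (Finset.mem_range.1 hi))
    _ ≤ ε * 1 := by
      rw [← Finset.mul_sum]
      exact mul_le_mul_of_nonneg_left (hasSum_inv_two_pow_succ.summable.sum_le_tsum _
        (fun _ _ => by positivity) |>.trans_eq hasSum_inv_two_pow_succ.tsum_eq) hε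
    _ = ε := mul_one ε
  have tail := abs_digitSum_le (fun i => hu (i + L)) (fun i => d (i + L))
  rw [digitSum_eq_sum_add hu d L]
  refine (abs_add_le _ _).trans (add_le_add head ?_)
  rw [abs_mul, abs_of_pos (by positivity), mul_comm]
  exact mul_le_mul_of_nonneg_right tail (by positivity)

theorem volume_range_digitSum_le (hu : ∀ i, |u i| ≤ C) (n : ℕ) {r : ℝ}
    (hr : ∀ d, |digitSum (fun i => u (i + n)) d| ≤ r) :
    volume (range (digitSum u)) ≤ ENNReal.ofReal (2 * r) := by
  let extend (p : Fin n → Fin 2) (j : ℕ) : Fin 2 := if h : j < n then p ⟨j, h⟩ else 0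
  let center (p : Fin n → Fin 2) : ℝ := ∑ i ∈ Finset.range n, ofDigitsTerm (extend p) i * u i
  have cover : range (digitSum u) ⊆ ⋃ p, Metric.closedBall (center p) (((2 : ℝ) ^ n)⁻¹ * r) := by
    rintro _ ⟨d, rfl⟩
    refine mem_iUnion.2 ⟨fun i => d i, ?_⟩
    have : center (fun i => d i) = ∑ i ∈ Finset.range n, ofDigitsTerm d i * u i :=
      Finset.sum_congr rfl fun i hi => by simp [extend, ofDigitsTerm, Finset.mem_range.1 hi]
    rw [Metric.mem_closedBall, Real.dist_eq, digitSum_eq_sum_add hu d n, this, add_sub_cancel_left,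
      abs_mul, abs_of_pos (by positivity)]
    exact mul_le_mul_of_nonneg_left (hr _) (by positivity)
  calc volume (range (digitSum u))
      ≤ ∑ p : Fin n → Fin 2, volume (Metric.closedBall (center p) (((2 : ℝ) ^ n)⁻¹ * r)) :=
        (measure_mono cover).trans (measure_iUnion_fintype_le _ _)
    _ = ENNReal.ofReal (2 * r) := by
        simp only [Real.volume_closedBall, Finset.sum_const, Finset.card_univ, Fintype.card_fun,
          Fintype.card_fin, nsmul_eq_mul, Nat.cast_pow, Nat.cast_ofNat]
        rw [← ENNReal.ofReal_ofNat 2, ← ENNReal.ofReal_pow zero_le_two,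
          ← ENNReal.ofReal_mul (by positivity)]
        field_simp

theorem volume_range_digitSum_eq_zero (hu : ∀ i, |u i| ≤ C)
    (hblocks : ∀ ε > 0, ∀ L, ∃ n, ∀ i < L, |u (i + n)| ≤ ε) :
    volume (range (digitSum u)) = 0 := by
  have bound (L : ℕ) :
      volume (range (digitSum u)) ≤ ENNReal.ofReal (2 * (1 + C) * ((2 : ℝ) ^ L)⁻¹) := by
    obtain ⟨n, hn⟩ := hblocks ((2 ^ L)⁻¹) (by positivity) L
    refine (volume_range_digitSum_le hu n (r := (2 ^ L)⁻¹ + C * (2 ^ L)⁻¹) fun d => ?_).trans_eq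
      (by ring_nf)
    exact abs_digitSum_le_of_abs_le (fun i => hu (i + n)) (by positivity) hn d
  have lim : Filter.Tendsto (fun L : ℕ => ENNReal.ofReal (2 * (1 + C) * ((2 : ℝ) ^ L)⁻¹))
      Filter.atTop (nhds 0) := by
    simpa using ENNReal.tendsto_ofReal ((tendsto_inv_atTop_zero.comp
      (tendsto_pow_atTop_atTop_of_one_lt one_lt_two)).const_mul (2 * (1 + C)))
  exact le_antisymm (ge_of_tendsto' lim bound) bot_le

end DigitSum

theorem exists_seq_approx_on_long_blocks : ∃ t : ℕ → ℝ, (∀ i, t i ∈ Icc (0 : ℝ) 1) ∧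
    ∀ y ∈ Icc (0 : ℝ) 1, ∀ ε > 0, ∀ L, ∃ n, ∀ i < L, |y - t (i + n)| ≤ ε := by
  obtain ⟨q, hq⟩ := TopologicalSpace.exists_dense_seq (Icc (0 : ℝ) 1)
  refine ⟨fun i => q (Nat.sqrt i).unpair.1, fun i => (q _).2, fun y hy ε hε L => ?_⟩
  obtain ⟨k, hk⟩ := hq.exists_dist_lt ⟨y, hy⟩ hε
  set m := Nat.pair k L
  -- `t` equals `q k` on the block `[m², m² + m)`, and `L ≤ m`.
  refine ⟨m * m, fun i hi => ?_⟩
  have : Nat.sqrt (i + m * m) = m := by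
    rw [add_comm]
    exact Nat.sqrt_add_eq m (by have := Nat.right_le_pair k L; omega)
  simpa [this, m, Subtype.dist_eq, Real.dist_eq] using hk.le

noncomputable def besicovitchSet (t : ℕ → ℝ) : Set (ℝ × ℝ) :=
  (fun p : (ℕ → Fin 2) × ℝ => (p.2, ofDigits p.1 * p.2 - digitSum t p.1)) '' (univ ×ˢ Icc 0 1)

section BesicovitchSet

variable {t : ℕ → ℝ}

theorem isCompact_besicovitchSet {C : ℝ} (ht : ∀ i, |t i| ≤ C) :
    IsCompact (besicovitchSet t) :=
  (isCompact_univ.prod isCompact_Icc).image <| continuous_snd.prodMk <|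
    ((continuous_ofDigits.comp continuous_fst).mul continuous_snd).sub
      ((continuous_digitSum ht).comp continuous_fst)

theorem volume_besicovitchSet (ht : ∀ i, t i ∈ Icc (0 : ℝ) 1)
    (hblocks : ∀ y ∈ Icc (0 : ℝ) 1, ∀ ε > 0, ∀ L, ∃ n, ∀ i < L, |y - t (i + n)| ≤ ε) :
    volume (besicovitchSet t) = 0 := by
  have ht' (i : ℕ) : |t i| ≤ 1 := (abs_of_nonneg (ht i).1).trans_le (ht i).2
  have slice_null (y : ℝ) : volume (Prod.mk y ⁻¹' besicovitchSet t) = 0 := by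
    by_cases hy : y ∈ Icc (0 : ℝ) 1
    · have hu (i : ℕ) : |y - t i| ≤ 1 := by
        simpa using abs_sub_le_of_le_of_le hy.1 hy.2 (ht i).1 (ht i).2
      refine measure_mono_null ?_ (volume_range_digitSum_eq_zero hu (hblocks y hy))
      rintro x ⟨⟨d, y'⟩, -, hx⟩
      obtain ⟨rfl, rfl⟩ := Prod.mk.inj hx
      exact ⟨d, (ofDigits_mul_sub_digitSum ht' d _).symm⟩
    · convert measure_empty (μ := (volume : Measure ℝ))
      refine eq_empty_of_forall_notMem ?_
      rintro x ⟨⟨d, y'⟩, ⟨-, hy'⟩, hx⟩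
      exact hy ((Prod.mk.inj hx).1 ▸ hy')
  rw [Measure.volume_eq_prod, Measure.prod_apply (isCompact_besicovitchSet ht').measurableSet]
  simp [slice_null]

theorem containsSegment_besicovitchSet {s : ℝ} (hs : s ∈ Icc (0 : ℝ) 1) :
    ContainsSegment (besicovitchSet t) (1, s) := by
  obtain ⟨d, -, rfl⟩ := ofDigits_SurjOn one_lt_two hs
  refine ⟨(0, -digitSum t d), fun y hy => ⟨(d, y), ⟨trivial, hy⟩, ?_⟩⟩
  ext <;> simp; ring

end BesicovitchSet

theorem hasBesicovitchSet_slopes :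
    HasBesicovitchSet (volume : Measure (ℝ × ℝ)) ({1} ×ˢ Icc 0 1) := by
  obtain ⟨t, ht, hblocks⟩ := exists_seq_approx_on_long_blocks
  refine ⟨besicovitchSet t, isCompact_besicovitchSet fun i => (abs_of_nonneg (ht i).1).trans_le
    (ht i).2, volume_besicovitchSet ht hblocks, ?_⟩
  rintro ⟨x, s⟩ ⟨hx, hs⟩
  obtain rfl : x = 1 := hx
  exact containsSegment_besicovitchSet hs

theorem hasBesicovitchSet_cone :
    HasBesicovitchSet (volume : Measure (ℝ × ℝ)) {v | 0 ≤ v.2 ∧ v.2 ≤ v.1 ∧ v.1 ≤ 1} := by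
  refine hasBesicovitchSet_slopes.smul_Icc.mono ?_
  rintro ⟨x, y⟩ ⟨h0, h1, h2⟩
  rcases (h0.trans h1).eq_or_lt with rfl | hx
  · obtain rfl : y = 0 := le_antisymm h1 h0
    exact ⟨0, ⟨le_rfl, zero_le_one⟩, (1, 0), ⟨rfl, le_rfl, zero_le_one⟩, by ext <;> simp⟩
  · refine ⟨x, ⟨hx.le, h2⟩, (1, y / x), ⟨rfl, div_nonneg h0 hx.le, div_le_one_of_le₀ h1 hx.le⟩, ?_⟩
    ext <;> simp [mul_div_cancel₀ _ hx.ne']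

theorem hasBesicovitchSet_closedBall :
    HasBesicovitchSet (volume : Measure (ℝ × ℝ)) (Metric.closedBall 0 1) := by
  have qmp (e : (ℝ × ℝ) ≃L[ℝ] ℝ × ℝ) := e.quasiMeasurePreserving_addHaar volume
  have cone := hasBesicovitchSet_cone
  have quadrant : HasBesicovitchSet volume (Icc (0 : ℝ) 1 ×ˢ Icc (0 : ℝ) 1) := by
    refine (cone.union (cone.preimage _ (qmp (.prodComm ℝ ℝ ℝ)))).mono ?_
    rintro ⟨x, y⟩ ⟨⟨hx0, hx1⟩, hy0, hy1⟩
    rcases le_total y x with h | h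
    · exact Or.inl ⟨hy0, h, hx1⟩
    · exact Or.inr ⟨hx0, h, hy1⟩
  have halfStrip : HasBesicovitchSet volume (Icc (0 : ℝ) 1 ×ˢ Icc (-1 : ℝ) 1) := by
    refine (quadrant.union (quadrant.preimage _
      (qmp ((ContinuousLinearEquiv.refl ℝ ℝ).prodCongr (.neg ℝ))))).mono ?_
    rintro ⟨x, y⟩ ⟨hx, hy0, hy1⟩
    rcases le_total 0 y with h | h
    · exact Or.inl ⟨hx, h, hy1⟩
    · exact Or.inr ⟨hx, neg_nonneg.2 h, neg_le.2 hy0⟩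
  refine (halfStrip.union (halfStrip.preimage _ (qmp (.neg ℝ)))).mono ?_
  rintro ⟨x, y⟩ hv
  rw [mem_closedBall_zero_iff, norm_prod_le_iff, Real.norm_eq_abs, Real.norm_eq_abs,
    abs_le, abs_le] at hv
  rcases le_total 0 x with h | h
  · exact Or.inl ⟨⟨h, hv.1.2⟩, hv.2⟩
  · exact Or.inr ⟨⟨neg_nonneg.2 h, neg_le.2 hv.1.1⟩, neg_le_neg hv.2.2, neg_le.2 hv.2.1⟩

/-- **Besicovitch's theorem**: there exists a Kakeya set `K ⊆ ℝ²` of Lebesgue measure zero. -/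
theorem besicovitch_kakeya_measure_zero :
    ∃ K : Set (EuclideanSpace ℝ (Fin 2)), IsKakeya K ∧ volume K = 0 := by
  let e : EuclideanSpace ℝ (Fin 2) ≃L[ℝ] ℝ × ℝ :=
    (EuclideanSpace.equiv (Fin 2) ℝ).trans (ContinuousLinearEquiv.finTwoArrow ℝ ℝ)
  have he : MeasurePreserving e :=
    (volume_preserving_finTwoArrow ℝ).comp (PiLp.volume_preserving_ofLp (Fin 2))
  obtain ⟨K, hK, hK0, hseg⟩ := hasBesicovitchSet_closedBall.preimage e he.quasiMeasurePreserving
  refine ⟨K, ⟨hK, fun ω hω => hseg ω ?_⟩, hK0⟩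
  rw [mem_preimage, mem_closedBall_zero_iff, norm_prod_le_iff]
  exact ⟨hω ▸ PiLp.norm_apply_le ω 0, hω ▸ PiLp.norm_apply_le ω 1⟩
end

section
/- Kakeya sets of arbitrarily small area: for every ε > 0 there exists a Kakeya set K ⊆ ℝ² with Lebesgue measure |K| < ε. -/
/-!
Perron's construction, carried out one vertical slice at a time. Start from the triangle
`{(x, y) | 0 ≤ x, 0 ≤ y ≤ w x}` and, for `j < k`, replace the figure by its union with the copy
moved by `(x, y) ↦ (x, y + 2ʲ w x - cⱼ)`; after `k` steps it contains, over `[0, 1]`, a line of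
every slope in `[0, 2ᵏ w]`. With `δⱼ = 1 - αʲ`, the offsets `cⱼ` are chosen so that the slice at
`x` stays close to `[0, 2ʲ w (x - δⱼ)]`: a merge doubles the old error and adds twice a tent of
area `2ʲ w (δⱼ₊₁ - δⱼ)²`, so the total error is `O(2ᵏ w (1 - α))`, while the intervals themselves
have length at most `2ᵏ w αᵏ`. Taking `2ᵏ w = 2`, `α` close to `1` and then `k` large makes the
area small. A shear turns the slopes `[0, 2]` into `[-1, 1]`, and adding the reflection in the
diagonal gives a unit segment in every direction.
-/

open MeasureTheory

open Set

theorem volume_Icc_diff_Icc_le (M M' : ℝ) :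
    volume (Icc 0 M \ Icc 0 M') ≤ ENNReal.ofReal (M - max M' 0) := by
  rw [← Real.volume_Icc]
  refine measure_mono fun y ⟨⟨hy0, hyM⟩, hy⟩ => ⟨max_le ?_ hy0, hyM⟩
  by_contra h
  exact hy ⟨hy0, (not_le.1 h).le⟩

theorem volume_Icc_diff_Icc_neg_le (M τ : ℝ) :
    volume (Icc 0 M \ Icc (-τ) M) ≤ ENNReal.ofReal (M - max (M + τ) 0) := by
  rw [← sub_zero (M - _), ← Real.volume_Icc]
  refine measure_mono fun y ⟨⟨hy0, hyM⟩, hy⟩ => ⟨hy0, ?_⟩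
  have : y < -τ := by
    by_contra h
    exact hy ⟨not_lt.1 h, hyM⟩
  rw [le_sub_iff_add_le, add_comm, ← le_sub_iff_add_le]
  exact max_le (by linarith) (by linarith)

theorem volume_image_add_const (τ : ℝ) (s : Set ℝ) : volume ((· + τ) '' s) = volume s := by
  simp only [image_add_right, measure_preimage_add_right]

theorem volume_union_image_add_diff_Icc_le (A : Set ℝ) (M τ : ℝ) :
    volume ((A ∪ (· + τ) '' A) \ Icc 0 (M + τ)) ≤
      2 * (volume (A \ Icc 0 M) + ENNReal.ofReal (M - max (M + τ) 0)) := by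
  have h_old : volume (A \ Icc 0 (M + τ)) ≤
      volume (A \ Icc 0 M) + ENNReal.ofReal (M - max (M + τ) 0) :=
    (measure_mono (sdiff_triangle _ (Icc 0 M) _)).trans <|
      (measure_union_le _ _).trans (add_le_add le_rfl (volume_Icc_diff_Icc_le _ _))
  have h_new : volume ((· + τ) '' A \ Icc 0 (M + τ)) ≤
      volume (A \ Icc 0 M) + ENNReal.ofReal (M - max (M + τ) 0) := by
    have : Icc 0 (M + τ) = (· + τ) '' Icc (-τ) M := by simp
    rw [this, ← image_sdiff (add_left_injective τ), volume_image_add_const]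
    exact (measure_mono (sdiff_triangle _ (Icc 0 M) _)).trans <|
      (measure_union_le _ _).trans (add_le_add le_rfl (volume_Icc_diff_Icc_neg_le _ _))
  calc _ ≤ volume (A \ Icc 0 (M + τ)) + volume ((· + τ) '' A \ Icc 0 (M + τ)) := by
        rw [union_sdiff_distrib]; exact measure_union_le _ _
    _ ≤ _ := by rw [two_mul]; exact add_le_add h_old h_new

theorem ofReal_tent_le_indicator {W δ δ' : ℝ} (hW : 0 ≤ W) (x : ℝ) :
    ENNReal.ofReal (W * (x - δ) - max (2 * W * (x - δ')) 0) ≤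
      (Icc δ (2 * δ' - δ)).indicator (fun _ => ENNReal.ofReal (W * (δ' - δ))) x := by
  by_cases hx : x ∈ Icc δ (2 * δ' - δ)
  · rw [indicator_of_mem hx]
    refine ENNReal.ofReal_le_ofReal ?_
    rcases le_total x δ' with h | h
    · nlinarith [le_max_right (2 * W * (x - δ')) 0]
    · nlinarith [le_max_left (2 * W * (x - δ')) 0, hx.2]
  · rw [indicator_of_notMem hx, nonpos_iff_eq_zero, ENNReal.ofReal_eq_zero, sub_nonpos]
    rcases not_and_or.1 hx with h | h
    · nlinarith [le_max_right (2 * W * (x - δ')) 0]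
    · nlinarith [le_max_left (2 * W * (x - δ')) 0]

theorem lintegral_ofReal_tent_le {W δ δ' : ℝ} (hW : 0 ≤ W) (hδ : δ ≤ δ') :
    ∫⁻ x, ENNReal.ofReal (W * (x - δ) - max (2 * W * (x - δ')) 0) ≤
      ENNReal.ofReal (2 * W * (δ' - δ) ^ 2) := by
  calc _ ≤ ∫⁻ x, (Icc δ (2 * δ' - δ)).indicator (fun _ => ENNReal.ofReal (W * (δ' - δ))) x :=
        lintegral_mono (ofReal_tent_le_indicator hW)
    _ = ENNReal.ofReal (2 * W * (δ' - δ) ^ 2) := by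
        rw [lintegral_indicator_const measurableSet_Icc, Real.volume_Icc,
          ← ENNReal.ofReal_mul (by nlinarith)]
        ring_nf

namespace PerronTree

variable (α w : ℝ)

noncomputable def width (j : ℕ) : ℝ := 2 ^ j * w

noncomputable def depth (j : ℕ) : ℝ := 1 - α ^ j

noncomputable def shift (j : ℕ) (x : ℝ) : ℝ := width w j * (x - 2 * depth α (j + 1) + depth α j)

noncomputable def coreTop (j : ℕ) (x : ℝ) : ℝ := width w j * (x - depth α j)

/-- `slice α w j x` is the slice at abscissa `x` of the figure after `j` merges; translating the
slices by `shift α w j x` adds `width w j` to the slope of every line in the figure. -/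
noncomputable def slice : ℕ → ℝ → Set ℝ
  | 0, x => Icc 0 (w * x)
  | j + 1, x => slice j x ∪ (· + shift α w j x) '' slice j x

noncomputable def excess : ℕ → ℝ → ENNReal
  | 0, _ => 0
  | j + 1, x => 2 * (excess j x + ENNReal.ofReal (coreTop α w j x - max (coreTop α w (j + 1) x) 0))

variable {α w}

theorem width_zero : width w 0 = w := by simp [width]

theorem width_succ (j : ℕ) : width w (j + 1) = 2 * width w j := by simp only [width]; ring

theorem width_nonneg (hw : 0 ≤ w) (j : ℕ) : 0 ≤ width w j := by unfold width; positivity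

theorem depth_succ_sub (j : ℕ) : depth α (j + 1) - depth α j = α ^ j * (1 - α) := by
  simp only [depth]; ring

theorem depth_mem_Icc (hα₀ : 0 ≤ α) (hα₁ : α ≤ 1) (j : ℕ) : depth α j ∈ Icc 0 1 := by
  have := pow_le_one₀ hα₀ hα₁ (n := j)
  have := pow_nonneg hα₀ j
  constructor <;> simp only [depth] <;> linarith

theorem coreTop_succ (j : ℕ) (x : ℝ) :
    coreTop α w (j + 1) x = coreTop α w j x + shift α w j x := by
  simp only [coreTop, shift, width_succ]; ring

theorem volume_slice_diff_Icc_le_excess (j : ℕ) (x : ℝ) :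
    volume (slice α w j x \ Icc 0 (coreTop α w j x)) ≤ excess α w j x := by
  induction j with
  | zero => simp [slice, excess, coreTop, width, depth]
  | succ j ih =>
    rw [slice, excess, coreTop_succ]
    exact (volume_union_image_add_diff_Icc_le _ _ _).trans (by gcongr)

theorem measurable_excess (j : ℕ) : Measurable (excess α w j) := by
  induction j with
  | zero => exact measurable_const
  | succ j ih =>
    simp only [excess, coreTop, width, depth]
    fun_prop

theorem lintegral_excess_le (hα₀ : 0 ≤ α) (hα₁ : α ≤ 1) (hw : 0 ≤ w) (j : ℕ) :
    ∫⁻ x, excess α w j x ≤ ENNReal.ofReal (4 * width w j * (1 - α) * depth α j) := by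
  induction j with
  | zero => simp [excess]
  | succ j ih =>
    have hW := width_nonneg hw j
    have hδ := depth_mem_Icc hα₀ hα₁ j
    have hΔ := depth_succ_sub (α := α) j
    have hαj := pow_le_one₀ hα₀ hα₁ (n := j)
    have hαj₀ := pow_nonneg hα₀ j
    have htent : ∫⁻ x, ENNReal.ofReal (coreTop α w j x - max (coreTop α w (j + 1) x) 0) ≤
        ENNReal.ofReal (2 * width w j * (depth α (j + 1) - depth α j) ^ 2) := by
      simpa only [coreTop, width_succ] using
        lintegral_ofReal_tent_le hW (by nlinarith : depth α j ≤ depth α (j + 1))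
    calc ∫⁻ x, excess α w (j + 1) x
        = 2 * ((∫⁻ x, excess α w j x) + ∫⁻ x, ENNReal.ofReal
            (coreTop α w j x - max (coreTop α w (j + 1) x) 0)) := by
          simp only [excess]
          rw [lintegral_const_mul' _ _ (by simp), lintegral_add_left (measurable_excess j)]
      _ ≤ 2 * (ENNReal.ofReal (4 * width w j * (1 - α) * depth α j) +
            ENNReal.ofReal (2 * width w j * (depth α (j + 1) - depth α j) ^ 2)) := by
          gcongr
      _ = ENNReal.ofReal (2 * (4 * width w j * (1 - α) * depth α j +
            2 * width w j * (depth α (j + 1) - depth α j) ^ 2)) := by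
          rw [ENNReal.ofReal_mul zero_le_two, ENNReal.ofReal_ofNat,
            ENNReal.ofReal_add (by have := hδ.1; positivity) (by positivity)]
      _ ≤ ENNReal.ofReal (4 * width w (j + 1) * (1 - α) * depth α (j + 1)) := by
          refine ENNReal.ofReal_le_ofReal ?_
          rw [width_succ, ← sub_add_cancel (depth α (j + 1)) (depth α j), hΔ]
          have : 0 ≤ width w j * (α ^ j * (1 - α) ^ 2) := by positivity
          nlinarith

theorem volume_slice_le (hw : 0 ≤ w) (j : ℕ) {x : ℝ} (hx : x ≤ 1) :
    volume (slice α w j x) ≤ ENNReal.ofReal (width w j * α ^ j) + excess α w j x := by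
  calc volume (slice α w j x)
      ≤ volume (slice α w j x ∩ Icc 0 (coreTop α w j x)) +
          volume (slice α w j x \ Icc 0 (coreTop α w j x)) := measure_le_inter_add_sdiff _ _ _
    _ ≤ volume (Icc 0 (coreTop α w j x)) + excess α w j x :=
        add_le_add (measure_mono inter_subset_right) (volume_slice_diff_Icc_le_excess j x)
    _ ≤ ENNReal.ofReal (width w j * α ^ j) + excess α w j x := by
        rw [Real.volume_Icc, sub_zero, coreTop, depth]
        gcongr
        · exact width_nonneg hw j
        · linarith

theorem exists_line_subset_slice (j : ℕ) {s : ℝ} (hs₀ : 0 ≤ s) (hs : s ≤ width w j) :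
    ∃ o, ∀ x, 0 ≤ x → s * x + o ∈ slice α w j x := by
  induction j generalizing s with
  | zero =>
    refine ⟨0, fun x hx => ⟨by positivity, ?_⟩⟩
    rw [width_zero] at hs
    nlinarith
  | succ j ih =>
    rcases le_or_gt s (width w j) with h | h
    · obtain ⟨o, ho⟩ := ih hs₀ h
      exact ⟨o, fun x hx => Or.inl (ho x hx)⟩
    · rw [width_succ] at hs
      obtain ⟨o, ho⟩ := ih (s := s - width w j) (by linarith) (by linarith)
      refine ⟨o - width w j * (2 * depth α (j + 1) - depth α j),
        fun x hx => Or.inr ⟨_, ho x hx, ?_⟩⟩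
      simp only [shift]
      ring

theorem isClosed_setOf_mem_slice (j : ℕ) : IsClosed {p : ℝ × ℝ | p.2 ∈ slice α w j p.1} := by
  induction j with
  | zero =>
    exact (isClosed_le continuous_const continuous_snd).inter
      (isClosed_le continuous_snd (continuous_const.mul continuous_fst))
  | succ j ih =>
    have : {p : ℝ × ℝ | p.2 ∈ slice α w (j + 1) p.1} = {p | p.2 ∈ slice α w j p.1} ∪
        (fun p : ℝ × ℝ => (p.1, p.2 - shift α w j p.1)) ⁻¹' {p | p.2 ∈ slice α w j p.1} := by
      ext p
      simp [slice, sub_eq_add_neg]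
    rw [this]
    exact ih.union (ih.preimage (by unfold shift; fun_prop))

theorem abs_shift_le (hα₀ : 0 ≤ α) (hα₁ : α ≤ 1) (hw : 0 ≤ w) (j : ℕ) {x : ℝ}
    (hx : x ∈ Icc 0 1) : |shift α w j x| ≤ 2 * width w j := by
  have h := depth_mem_Icc hα₀ hα₁ j
  have h' := depth_mem_Icc hα₀ hα₁ (j + 1)
  rw [shift, abs_mul, abs_of_nonneg (width_nonneg hw j), mul_comm]
  refine mul_le_mul_of_nonneg_right ?_ (width_nonneg hw j)
  rw [abs_le]
  constructor <;> linarith [hx.1, hx.2, h.1, h.2, h'.1, h'.2]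

theorem abs_le_of_mem_slice (hα₀ : 0 ≤ α) (hα₁ : α ≤ 1) (hw : 0 ≤ w) (j : ℕ) {x y : ℝ}
    (hx : x ∈ Icc 0 1) (hy : y ∈ slice α w j x) : |y| ≤ 4 * width w j := by
  induction j generalizing y with
  | zero =>
    rw [width_zero, abs_of_nonneg hy.1]
    nlinarith [hy.2, hx.2]
  | succ j ih =>
    have hW := width_nonneg hw j
    rw [width_succ]
    rcases hy with hy | ⟨z, hz, rfl⟩
    · linarith [ih hy]
    · linarith [abs_add_le z (shift α w j x), ih hz, abs_shift_le hα₀ hα₁ hw j hx]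

variable (α w) in
def planeSet (k : ℕ) : Set (ℝ × ℝ) :=
  {p | p.1 ∈ Icc 0 1 ∧ p.2 + p.1 ∈ slice α w k p.1}

theorem isClosed_planeSet (k : ℕ) : IsClosed (planeSet α w k) :=
  (isClosed_Icc.preimage continuous_fst).inter <| (isClosed_setOf_mem_slice k).preimage <|
    continuous_fst.prodMk (continuous_snd.add continuous_fst)

theorem isCompact_planeSet (hα₀ : 0 ≤ α) (hα₁ : α ≤ 1) (hw : 0 ≤ w) (k : ℕ) :
    IsCompact (planeSet α w k) := by
  refine ((isCompact_Icc (a := (0 : ℝ)) (b := 1)).prod (isCompact_Icc (a := -(4 * width w k) - 1)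
    (b := 4 * width w k))).of_isClosed_subset (isClosed_planeSet k) ?_
  rintro ⟨x, y⟩ ⟨hx, hy⟩
  have := abs_le.1 (abs_le_of_mem_slice hα₀ hα₁ hw k hx hy)
  exact ⟨hx, by linarith [hx.1, hx.2], by linarith [hx.1]⟩

theorem volume_planeSet_le (hα₀ : 0 ≤ α) (hα₁ : α ≤ 1) (hw : 0 ≤ w) (k : ℕ) :
    volume (planeSet α w k) ≤ ENNReal.ofReal (width w k * (α ^ k + 4 * (1 - α))) := by
  have h_slice (x : ℝ) : volume (Prod.mk x ⁻¹' planeSet α w k) ≤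
      (Icc 0 1).indicator (fun _ => ENNReal.ofReal (width w k * α ^ k)) x + excess α w k x := by
    by_cases hx : x ∈ Icc (0 : ℝ) 1
    · have : Prod.mk x ⁻¹' planeSet α w k = (· + x) ⁻¹' slice α w k x := by
        ext y; exact and_iff_right hx
      rw [this, measure_preimage_add_right, indicator_of_mem hx]
      exact volume_slice_le hw k hx.2
    · have : Prod.mk x ⁻¹' planeSet α w k = ∅ :=
        eq_empty_of_forall_notMem fun y hy => hx hy.1
      simp [this]
  have hW := width_nonneg hw k
  have hδ := depth_mem_Icc hα₀ hα₁ k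
  calc volume (planeSet α w k) = ∫⁻ x, volume (Prod.mk x ⁻¹' planeSet α w k) := by
        rw [Measure.volume_eq_prod]
        exact Measure.prod_apply (isClosed_planeSet k).measurableSet
    _ ≤ ∫⁻ x, ((Icc 0 1).indicator (fun _ => ENNReal.ofReal (width w k * α ^ k)) x +
          excess α w k x) := lintegral_mono h_slice
    _ ≤ ENNReal.ofReal (width w k * α ^ k) +
          ENNReal.ofReal (4 * width w k * (1 - α) * depth α k) := by
        rw [lintegral_add_right _ (measurable_excess k),
          lintegral_indicator_const measurableSet_Icc, Real.volume_Icc, sub_zero,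
          ENNReal.ofReal_one, mul_one]
        gcongr
        exact lintegral_excess_le hα₀ hα₁ hw k
    _ ≤ ENNReal.ofReal (width w k * (α ^ k + 4 * (1 - α))) := by
        have : 0 ≤ 4 * width w k * (1 - α) * depth α k := by
          have := sub_nonneg.2 hα₁; have := hδ.1; positivity
        rw [← ENNReal.ofReal_add (by positivity) this]
        refine ENNReal.ofReal_le_ofReal ?_
        nlinarith [hδ.2, mul_nonneg hW (sub_nonneg.2 hα₁)]

theorem exists_line_subset_planeSet {k : ℕ} (hk : 2 ≤ width w k) {σ : ℝ}
    (hσ : σ ∈ Icc (-1) 1) : ∃ o, ∀ x ∈ Icc (0 : ℝ) 1, (x, σ * x + o) ∈ planeSet α w k := by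
  obtain ⟨o, ho⟩ := exists_line_subset_slice (α := α) k (s := σ + 1) (by linarith [hσ.1])
    (by linarith [hσ.2])
  exact ⟨o, fun x hx => ⟨hx, by convert ho x hx.1 using 1; ring⟩⟩

end PerronTree

theorem exists_segment_of_forall_slope {S : Set (ℝ × ℝ)}
    (hS : ∀ σ ∈ Icc (-1 : ℝ) 1, ∃ o, ∀ x ∈ Icc (0 : ℝ) 1, (x, σ * x + o) ∈ S) {u v : ℝ}
    (hu : u ≠ 0) (hvu : |v| ≤ |u|) (hu₁ : |u| ≤ 1) :
    ∃ a : ℝ × ℝ, ∀ t ∈ Icc (0 : ℝ) 1, a + t • (u, v) ∈ S := by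
  obtain ⟨o, ho⟩ := hS (v / u) <| abs_le.1 <| by
    rwa [abs_div, div_le_one (abs_pos.2 hu)]
  have hx₀ (t : ℝ) (ht : t ∈ Icc (0 : ℝ) 1) : max (-u) 0 + t * u ∈ Icc (0 : ℝ) 1 := by
    obtain ⟨h₁, h₂⟩ := abs_le.1 hu₁
    rcases le_total u 0 with h | h
    · rw [max_eq_left (by linarith)]
      constructor <;> nlinarith [ht.1, ht.2]
    · rw [max_eq_right (by linarith)]
      constructor <;> nlinarith [ht.1, ht.2]
  refine ⟨(max (-u) 0, v / u * max (-u) 0 + o), fun t ht => ?_⟩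
  convert ho _ (hx₀ t ht) using 1
  ext
  · simp
  · simp only [Prod.snd_add, Prod.smul_snd, smul_eq_mul]
    rw [mul_add, mul_left_comm, div_mul_cancel₀ v hu]
    ring

theorem exists_segment_mem_union_swap {S : Set (ℝ × ℝ)}
    (hS : ∀ σ ∈ Icc (-1 : ℝ) 1, ∃ o, ∀ x ∈ Icc (0 : ℝ) 1, (x, σ * x + o) ∈ S) {u v : ℝ}
    (huv : u ^ 2 + v ^ 2 = 1) :
    ∃ a : ℝ × ℝ, ∀ t ∈ Icc (0 : ℝ) 1, a + t • (u, v) ∈ S ∪ Prod.swap ⁻¹' S := by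
  rcases le_total |v| |u| with h | h
  · have hu : u ≠ 0 := by
      rintro rfl
      nlinarith [abs_nonpos_iff.1 (h.trans_eq abs_zero)]
    obtain ⟨a, ha⟩ := exists_segment_of_forall_slope hS hu h
      (sq_le_one_iff_abs_le_one u |>.1 (by nlinarith))
    exact ⟨a, fun t ht => Or.inl (ha t ht)⟩
  · have hv : v ≠ 0 := by
      rintro rfl
      nlinarith [abs_nonpos_iff.1 (h.trans_eq abs_zero)]
    obtain ⟨a, ha⟩ := exists_segment_of_forall_slope hS hv h
      (sq_le_one_iff_abs_le_one v |>.1 (by nlinarith))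
    exact ⟨a.swap, fun t ht => Or.inr (ha t ht)⟩

noncomputable def euclideanPlaneEquivProd : EuclideanSpace ℝ (Fin 2) ≃L[ℝ] ℝ × ℝ :=
  (EuclideanSpace.equiv (Fin 2) ℝ).trans (ContinuousLinearEquiv.finTwoArrow ℝ ℝ)

theorem measurePreserving_euclideanPlaneEquivProd :
    MeasurePreserving euclideanPlaneEquivProd :=
  (volume_preserving_finTwoArrow ℝ).comp
    (EuclideanSpace.volume_preserving_symm_measurableEquiv_toLp (Fin 2))

theorem isKakeya_preimage_union_swap {S : Set (ℝ × ℝ)} (hSc : IsCompact S)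
    (hS : ∀ σ ∈ Icc (-1 : ℝ) 1, ∃ o, ∀ x ∈ Icc (0 : ℝ) 1, (x, σ * x + o) ∈ S) :
    IsKakeya (euclideanPlaneEquivProd ⁻¹' (S ∪ Prod.swap ⁻¹' S)) := by
  refine ⟨euclideanPlaneEquivProd.toHomeomorph.isCompact_preimage.2 ?_, fun ω hω => ?_⟩
  · rw [← image_swap_eq_preimage_swap]
    exact hSc.union (hSc.image continuous_swap)
  have hω' : ω 0 ^ 2 + ω 1 ^ 2 = 1 := by
    have h := congrArg (· ^ 2) hω
    simpa [EuclideanSpace.norm_sq_eq, Fin.sum_univ_two] using h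
  obtain ⟨a, ha⟩ := exists_segment_mem_union_swap hS hω'
  refine ⟨euclideanPlaneEquivProd.symm a, fun t ht => ?_⟩
  rw [mem_preimage, map_add, map_smul, ContinuousLinearEquiv.apply_symm_apply]
  exact ha t ht

theorem volume_preimage_union_swap_le (S : Set (ℝ × ℝ)) :
    volume (euclideanPlaneEquivProd ⁻¹' (S ∪ Prod.swap ⁻¹' S)) ≤ 2 * volume S := by
  have hswap : MeasurePreserving (Prod.swap : ℝ × ℝ → ℝ × ℝ) := by
    rw [Measure.volume_eq_prod]
    exact Measure.measurePreserving_swap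
  calc _ ≤ volume (S ∪ Prod.swap ⁻¹' S) :=
        measurePreserving_euclideanPlaneEquivProd.measure_preimage_le _
    _ ≤ volume S + volume S :=
        (measure_union_le _ _).trans (add_le_add le_rfl (hswap.measure_preimage_le S))
    _ = 2 * volume S := (two_mul _).symm

open PerronTree in
/-- **Kakeya sets of arbitrarily small area**: for every `ε > 0` there is a Kakeya set
`K ⊆ ℝ²` with `|K| < ε`. -/
theorem kakeya_arbitrarily_small_area (ε : ℝ) (hε : 0 < ε) :
    ∃ K : Set (EuclideanSpace ℝ (Fin 2)), IsKakeya K ∧ volume K < ENNReal.ofReal ε := by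
  set α := max 0 (1 - ε / 64)
  have hα₀ : 0 ≤ α := le_max_left _ _
  have hα₁ : α < 1 := max_lt zero_lt_one (by linarith)
  have hα : 1 - α ≤ ε / 64 := by linarith [le_max_right 0 (1 - ε / 64)]
  obtain ⟨k, hk⟩ := exists_pow_lt_of_lt_one (by positivity : 0 < ε / 8) hα₁
  set w : ℝ := 2 / 2 ^ k
  have hw : 0 ≤ w := by positivity
  have hW : width w k = 2 := by simp only [width, w]; field_simp
  set S := planeSet α w k
  refine ⟨euclideanPlaneEquivProd ⁻¹' (S ∪ Prod.swap ⁻¹' S),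
    isKakeya_preimage_union_swap (isCompact_planeSet hα₀ hα₁.le hw k)
      fun σ hσ => exists_line_subset_planeSet hW.ge hσ, ?_⟩
  calc _ ≤ 2 * volume S := volume_preimage_union_swap_le S
    _ ≤ 2 * ENNReal.ofReal (2 * (α ^ k + 4 * (1 - α))) := by
        gcongr
        exact hW ▸ volume_planeSet_le hα₀ hα₁.le hw k
    _ < ENNReal.ofReal ε := by
        rw [← ENNReal.ofReal_ofNat, ← ENNReal.ofReal_mul zero_le_two,
          ENNReal.ofReal_lt_ofReal_iff hε]
        linarith
end
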